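/- arXiv:1611.01115 — 2 statements merged into one kernel-verified Lean document; each statement's English description precedes it below -/
import Mathlib

section
/- The taxi walk connective constant satisfies √2 ≤ μ_taxi ≤ (1+√5)/2. -/
open Filter

/-- The oriented step relation of the Manhattan lattice. -/
def taxiStep (u v : ℤ × ℤ) : Prop :=
  (Even u.2 ∧ v = (u.1 + 1, u.2)) ∨
  (Odd u.2 ∧ v = (u.1 - 1, u.2)) ∨
  (Even u.1 ∧ v = (u.1, u.2 + 1)) ∨
  (Odd u.1 ∧ v = (u.1, u.2 - 1))

/-- Perpendicularity of two step vectors. -/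
def perp (d e : ℤ × ℤ) : Prop := d.1 * e.1 + d.2 * e.2 = 0

instance (d e : ℤ × ℤ) : Decidable (perp d e) := by unfold perp; infer_instance

/-- The walk `l` turns at its `i`-th vertex (meaningful for `1 ≤ i ≤ l.length - 2`). -/
def turnAt (l : List (ℤ × ℤ)) (i : ℕ) : Prop :=
  perp (l.getD i 0 - l.getD (i - 1) 0) (l.getD (i + 1) 0 - l.getD i 0)

instance (l : List (ℤ × ℤ)) (i : ℕ) : Decidable (turnAt l i) := by
  unfold turnAt; infer_instance

/-- A taxi walk, recorded as its list of vertices (a walk of length `n` has `n + 1` vertices). -/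
def IsTaxiWalk (l : List (ℤ × ℤ)) : Prop :=
  l ≠ [] ∧ l.Nodup ∧
  (∀ i, i + 1 < l.length → taxiStep (l.getD i 0) (l.getD (i + 1) 0)) ∧
  (∀ i, 1 ≤ i → i + 2 < l.length → ¬(turnAt l i ∧ turnAt l (i + 1)))

/-- The set of taxi walks of length `n` starting at the origin. -/
def originWalks (n : ℕ) : Set (List (ℤ × ℤ)) :=
  {l | IsTaxiWalk l ∧ l.length = n + 1 ∧ l.getD 0 0 = 0}

/-- `taxiCount n` is `c_n`, the number of taxi walks of length `n` starting at the origin. -/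
noncomputable def taxiCount (n : ℕ) : ℕ := (originWalks n).ncard

/-- The turn-word of a walk: `true` (the letter `t`) where the walk turns,
`false` (the letter `s`) where it goes straight. -/
def turnWord (l : List (ℤ × ℤ)) : List Bool :=
  (List.range (l.length - 2)).map fun i => decide (turnAt l (i + 1))

/-- The encoding of a taxi walk starting at the origin: the first coordinate is `true`
(for `N`) if `v₁ = (0,1)` and `false` (for `E`) if `v₁ = (1,0)`; the second is the turn-word. -/
def encode (l : List (ℤ × ℤ)) : Bool × List Bool :=
  (decide (l.getD 1 0 = (0, 1)), turnWord l)

/-- A bridge: a taxi walk from `(0,0)` to `(1,0)` staying at abscissa `≥ 1` after the start,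
whose last step is horizontal and ends at maximal abscissa. -/
def IsBridge (l : List (ℤ × ℤ)) : Prop :=
  IsTaxiWalk l ∧ 2 ≤ l.length ∧ l.getD 0 0 = (0, 0) ∧ l.getD 1 0 = (1, 0) ∧
  (∀ i, 1 ≤ i → i < l.length → 1 ≤ (l.getD i 0).1) ∧
  (l.getD (l.length - 1) 0).2 = (l.getD (l.length - 2) 0).2 ∧
  (∀ i, i < l.length → (l.getD i 0).1 ≤ (l.getD (l.length - 1) 0).1)

/-- `bridgeCount n` is `b_n`, the number of bridges of length `n`, with `b_0 = 1`. -/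
noncomputable def bridgeCount : ℕ → ℕ
  | 0 => 1
  | n + 1 => {l : List (ℤ × ℤ) | IsBridge l ∧ l.length = n + 2}.ncard

/-- The normalizing symmetry `f_{(x,y)}` of the oriented Manhattan lattice. -/
def normMap (p : ℤ × ℤ) (q : ℤ × ℤ) : ℤ × ℤ :=
  if Even p.1 then
    (if Even p.2 then (q.1 - p.1, q.2 - p.2) else (-(q.1 - p.1), q.2 - p.2))
  else
    (if Even p.2 then (q.1 - p.1, -(q.2 - p.2)) else (-(q.1 - p.1), -(q.2 - p.2)))

/-- The vertex `v_i` is a cutvertex of the bridge `l`. -/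
def IsCutAt (l : List (ℤ × ℤ)) (i : ℕ) : Prop :=
  0 < i ∧ i + 1 < l.length ∧
  IsBridge (l.take (i + 1)) ∧
  l.getD (i + 1) 0 = l.getD i 0 + (1, 0) ∧
  IsBridge ((l.drop i).map (normMap (l.getD i 0)))

/-- An irreducible bridge: a bridge with no cutvertex. -/
def IsIrreducibleBridge (l : List (ℤ × ℤ)) : Prop :=
  IsBridge l ∧ ∀ i, ¬ IsCutAt l i

/-- `irrBridgeCount n` is `a_n`, the number of irreducible bridges of length `n`, with `a_0 = 0`. -/
noncomputable def irrBridgeCount : ℕ → ℕ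
  | 0 => 0
  | n + 1 => {l : List (ℤ × ℤ) | IsIrreducibleBridge l ∧ l.length = n + 2}.ncard

/-!
A taxi walk from the origin is determined by its first step and its word of turns and straight
moves, and that word has no two consecutive turns. There are `F_{n+1}` such words of length
`n - 1`, so `c_n ≤ 2 F_{n+1} ≤ 2 φ^n`. Conversely, the walks made of pairs of equal steps, each
pair east or north, go straight at every odd vertex and never revisit a vertex, so `c_{2n} ≥ 2^n`.
-/

open Filter Topology Real goldenRatio

theorem List.isChain_iff_getD {α : Type*} {R : α → α → Prop} {l : List α} (d : α) :
    l.IsChain R ↔ ∀ i, i + 1 < l.length → R (l.getD i d) (l.getD (i + 1) d) := by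
  rw [List.isChain_iff_getElem]
  refine ⟨fun h i hi => ?_, fun h i hi => ?_⟩
  · rw [List.getD_eq_getElem _ d hi, List.getD_eq_getElem _ d (by omega)]
    exact h i hi
  · simpa only [List.getD_eq_getElem _ d hi, List.getD_eq_getElem _ d (by omega : i < l.length)]
      using h i hi

theorem taxiStep_eq_of_perp_iff {u v w₁ w₂ : ℤ × ℤ} (huv : taxiStep u v)
    (h₁ : taxiStep v w₁) (h₂ : taxiStep v w₂)
    (hperp : perp (v - u) (w₁ - v) ↔ perp (v - u) (w₂ - v)) : w₁ = w₂ := by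
  rcases huv with ⟨hu, rfl⟩ | ⟨hu, rfl⟩ | ⟨hu, rfl⟩ | ⟨hu, rfl⟩ <;>
  rcases h₁ with ⟨hv₁, rfl⟩ | ⟨hv₁, rfl⟩ | ⟨hv₁, rfl⟩ | ⟨hv₁, rfl⟩ <;>
  rcases h₂ with ⟨hv₂, rfl⟩ | ⟨hv₂, rfl⟩ | ⟨hv₂, rfl⟩ | ⟨hv₂, rfl⟩ <;>
  simp_all [perp, Prod.ext_iff, Int.even_iff, Int.odd_iff] <;> omega

theorem taxiStep_zero {v : ℤ × ℤ} (h : taxiStep 0 v) : v = (1, 0) ∨ v = (0, 1) := by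
  rcases h with ⟨h, rfl⟩ | ⟨h, rfl⟩ | ⟨h, rfl⟩ | ⟨h, rfl⟩ <;> simp_all

theorem IsTaxiWalk.eq_of_turnAt_iff {l₁ l₂ : List (ℤ × ℤ)} (h₁ : IsTaxiWalk l₁)
    (h₂ : IsTaxiWalk l₂) (hlen : l₁.length = l₂.length) (h0 : l₁.getD 0 0 = l₂.getD 0 0)
    (h1 : 1 < l₁.length → l₁.getD 1 0 = l₂.getD 1 0)
    (hturn : ∀ i, i + 2 < l₁.length → (turnAt l₁ (i + 1) ↔ turnAt l₂ (i + 1))) :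
    l₁ = l₂ := by
  have key : ∀ i, i + 1 < l₁.length →
      l₁.getD i 0 = l₂.getD i 0 ∧ l₁.getD (i + 1) 0 = l₂.getD (i + 1) 0 := by
    intro i
    induction i with
    | zero => exact fun h => ⟨h0, h1 h⟩
    | succ k ih =>
      intro hk
      obtain ⟨hu, hv⟩ := ih (by omega)
      have hperp := hturn k (by omega)
      simp only [turnAt, Nat.add_sub_cancel, hu, hv] at hperp
      refine ⟨hv, taxiStep_eq_of_perp_iff (hu ▸ hv ▸ h₁.2.2.1 k (by omega))
        (hv ▸ h₁.2.2.1 (k + 1) hk) (h₂.2.2.1 (k + 1) (by omega)) hperp⟩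
  refine List.ext_getElem hlen fun i hi₁ hi₂ => ?_
  rw [← List.getD_eq_getElem _ 0 hi₁, ← List.getD_eq_getElem _ 0 hi₂]
  cases i with
  | zero => exact h0
  | succ k => exact (key k hi₁).2

theorem turnWord_getD {l : List (ℤ × ℤ)} {i : ℕ} (hi : i + 2 < l.length) :
    (turnWord l).getD i false = decide (turnAt l (i + 1)) := by
  rw [List.getD_eq_getElem _ _ (by simp [turnWord]; omega)]
  simp [turnWord]

theorem encode_injOn (n : ℕ) : Set.InjOn encode (originWalks n) := by
  rintro l₁ ⟨h₁, hlen₁, h0₁⟩ l₂ ⟨h₂, hlen₂, h0₂⟩ he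
  simp only [encode, Prod.mk.injEq, decide_eq_decide] at he
  refine h₁.eq_of_turnAt_iff h₂ (hlen₁.trans hlen₂.symm) (h0₁.trans h0₂.symm)
    (fun h => ?_) (fun i hi => ?_)
  · have s₁ := h₁.2.2.1 0 h
    have s₂ := h₂.2.2.1 0 (by omega)
    rw [h0₁] at s₁
    rw [h0₂] at s₂
    rcases taxiStep_zero s₁ with e₁ | e₁ <;> rcases taxiStep_zero s₂ with e₂ | e₂ <;>
      simp_all
  · have := congrArg (fun w => w.getD i false) he.2
    rw [turnWord_getD hi, turnWord_getD (by omega)] at this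
    simpa using this

def noDoubleTurnWords (m : ℕ) : Set (List Bool) :=
  {w | w.length = m ∧ w.IsChain fun a b => ¬(a = true ∧ b = true)}

theorem noDoubleTurnWords_finite (m : ℕ) : (noDoubleTurnWords m).Finite :=
  (List.finite_length_eq Bool m).subset fun _ hw => hw.1

theorem noDoubleTurnWords_add_two_subset (m : ℕ) :
    noDoubleTurnWords (m + 2) ⊆
      List.cons false '' noDoubleTurnWords (m + 1) ∪
        (fun w => true :: false :: w) '' noDoubleTurnWords m := by
  rintro (_ | ⟨a, _ | ⟨b, t⟩⟩) ⟨hlen, hch⟩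
  · simp at hlen
  · simp at hlen
  simp only [List.length_cons, add_left_inj] at hlen
  rw [List.isChain_cons_cons] at hch
  cases a
  · exact Or.inl ⟨b :: t, ⟨by simpa using hlen, hch.2⟩, rfl⟩
  · cases b
    · exact Or.inr ⟨t, ⟨hlen, hch.2.tail⟩, rfl⟩
    · exact absurd ⟨rfl, rfl⟩ hch.1

theorem ncard_noDoubleTurnWords_le_fib (m : ℕ) :
    (noDoubleTurnWords m).ncard ≤ Nat.fib (m + 2) := by
  induction m using Nat.strong_induction_on with
  | _ m ih =>
    match m with
    | 0 =>
      have hsub : noDoubleTurnWords 0 ⊆ {[]} := fun w hw => List.length_eq_zero_iff.mp hw.1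
      simpa using Set.ncard_le_ncard hsub
    | 1 =>
      have hsub : noDoubleTurnWords 1 ⊆ {[false], [true]} := by
        rintro w ⟨hlen, -⟩
        obtain ⟨a, rfl⟩ := List.length_eq_one_iff.mp hlen
        cases a <;> simp
      simpa [Set.ncard_pair, show Nat.fib 3 = 2 from rfl] using Set.ncard_le_ncard hsub
    | k + 2 =>
      calc (noDoubleTurnWords (k + 2)).ncard
          ≤ (List.cons false '' noDoubleTurnWords (k + 1)).ncard +
              ((fun w => true :: false :: w) '' noDoubleTurnWords k).ncard :=
            (Set.ncard_le_ncard (noDoubleTurnWords_add_two_subset k)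
              (((noDoubleTurnWords_finite _).image _).union
                ((noDoubleTurnWords_finite _).image _))).trans (Set.ncard_union_le _ _)
        _ ≤ (noDoubleTurnWords (k + 1)).ncard + (noDoubleTurnWords k).ncard :=
            add_le_add (Set.ncard_image_le (noDoubleTurnWords_finite _))
              (Set.ncard_image_le (noDoubleTurnWords_finite _))
        _ ≤ Nat.fib (k + 3) + Nat.fib (k + 2) := add_le_add (ih _ (by omega)) (ih _ (by omega))
        _ = Nat.fib (k + 4) := by rw [Nat.fib_add_two (n := k + 2), add_comm]

theorem turnWord_mem_noDoubleTurnWords {l : List (ℤ × ℤ)} (hl : IsTaxiWalk l) :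
    turnWord l ∈ noDoubleTurnWords (l.length - 2) := by
  refine ⟨by simp [turnWord], List.isChain_iff_getElem.2 fun i hi => ?_⟩
  simp only [turnWord, List.length_map, List.length_range] at hi
  simp only [turnWord, List.getElem_map, List.getElem_range, decide_eq_true_eq]
  exact hl.2.2.2 (i + 1) (by omega) (by omega)

theorem encode_image_originWalks_subset (n : ℕ) :
    encode '' originWalks n ⊆ Set.univ ×ˢ noDoubleTurnWords (n - 1) := by
  rintro _ ⟨l, ⟨hl, hlen, -⟩, rfl⟩
  exact ⟨trivial, by simpa [encode, hlen] using turnWord_mem_noDoubleTurnWords hl⟩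

theorem originWalks_finite (n : ℕ) : (originWalks n).Finite :=
  Set.Finite.of_finite_image (((Set.finite_univ).prod (noDoubleTurnWords_finite _)).subset
    (encode_image_originWalks_subset n)) (encode_injOn n)

theorem taxiCount_le_two_mul_fib (n : ℕ) : taxiCount n ≤ 2 * Nat.fib (n + 1) :=
  calc taxiCount n = (encode '' originWalks n).ncard := ((encode_injOn n).ncard_image).symm
    _ ≤ (Set.univ ×ˢ noDoubleTurnWords (n - 1)).ncard :=
      Set.ncard_le_ncard (encode_image_originWalks_subset n)
        ((Set.finite_univ).prod (noDoubleTurnWords_finite _))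
    _ = 2 * (noDoubleTurnWords (n - 1)).ncard := by simp [Set.ncard_prod]
    _ ≤ 2 * Nat.fib (n + 1) := by
      gcongr
      rcases n with _ | n
      · exact ncard_noDoubleTurnWords_le_fib 0
      · exact ncard_noDoubleTurnWords_le_fib n

theorem fib_succ_le_goldenRatio_pow (n : ℕ) : (Nat.fib (n + 1) : ℝ) ≤ φ ^ n := by
  have h := goldenRatio_mul_fib_succ_add_fib n
  have : φ * Nat.fib (n + 1) ≤ φ * φ ^ n := by
    rw [← pow_succ']
    linarith [Nat.cast_nonneg (α := ℝ) (Nat.fib n)]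
  exact le_of_mul_le_mul_left this goldenRatio_pos

theorem taxiCount_le_two_mul_goldenRatio_pow (n : ℕ) : (taxiCount n : ℝ) ≤ 2 * φ ^ n :=
  calc (taxiCount n : ℝ) ≤ 2 * Nat.fib (n + 1) := by exact_mod_cast taxiCount_le_two_mul_fib n
    _ ≤ 2 * φ ^ n := by gcongr; exact fib_succ_le_goldenRatio_pow n

def stairStep (b : Bool) : ℤ × ℤ := if b then (0, 1) else (1, 0)

def stairWalk : List Bool → ℤ × ℤ → List (ℤ × ℤ)
  | [], p => [p]
  | b :: bs, p => p :: (p + stairStep b) :: stairWalk bs (p + stairStep b + stairStep b)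

theorem stairWalk_length (bs : List Bool) (p : ℤ × ℤ) :
    (stairWalk bs p).length = 2 * bs.length + 1 := by
  induction bs generalizing p with
  | nil => rfl
  | cons b bs ih => simp [stairWalk, ih]; ring

theorem stairWalk_eq_cons (bs : List Bool) (p : ℤ × ℤ) :
    ∃ t, stairWalk bs p = p :: t := by
  cases bs <;> exact ⟨_, rfl⟩

theorem stairWalk_getD_zero (bs : List Bool) (p : ℤ × ℤ) : (stairWalk bs p).getD 0 0 = p := by
  cases bs <;> rfl

theorem stairWalk_injective (p : ℤ × ℤ) : Function.Injective (stairWalk · p) := by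
  intro bs cs h
  induction bs generalizing p cs with
  | nil => cases cs <;> simp_all [stairWalk]
  | cons b bs ih =>
    cases cs with
    | nil => simp [stairWalk] at h
    | cons c cs =>
      simp only [stairWalk, List.cons.injEq, add_right_inj] at h
      obtain ⟨-, hbc, h⟩ := h
      have hbc : b = c := by cases b <;> cases c <;> simp_all [stairStep]
      subst hbc
      rw [ih _ h]

theorem stairStep_coord_sum (b : Bool) : (stairStep b).1 + (stairStep b).2 = 1 := by
  cases b <;> rfl

theorem le_coord_sum_of_mem_stairWalk {bs : List Bool} {p q : ℤ × ℤ}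
    (hq : q ∈ stairWalk bs p) : p.1 + p.2 ≤ q.1 + q.2 := by
  induction bs generalizing p with
  | nil => simp_all [stairWalk]
  | cons b bs ih =>
    have := stairStep_coord_sum b
    simp only [stairWalk, List.mem_cons] at hq
    rcases hq with rfl | rfl | hq
    · rfl
    · simp only [Prod.fst_add, Prod.snd_add]; omega
    · have := ih hq
      simp only [Prod.fst_add, Prod.snd_add] at this; omega

/-- The coordinate sum increases along the walk, so no vertex is repeated. -/
theorem stairWalk_nodup (bs : List Bool) (p : ℤ × ℤ) : (stairWalk bs p).Nodup := by
  induction bs generalizing p with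
  | nil => simp [stairWalk]
  | cons b bs ih =>
    have hb := stairStep_coord_sum b
    have hrest := fun q hq => le_coord_sum_of_mem_stairWalk (bs := bs)
      (p := p + stairStep b + stairStep b) (q := q) hq
    simp only [Prod.fst_add, Prod.snd_add] at hrest
    refine List.nodup_cons.2 ⟨fun h => ?_, List.nodup_cons.2 ⟨fun h => ?_, ih _⟩⟩
    · rcases List.mem_cons.1 h with h | h
      · have := congrArg (fun q : ℤ × ℤ => q.1 + q.2) h
        simp only [Prod.fst_add, Prod.snd_add] at this; omega
      · have := hrest p h; omega
    · have := hrest _ h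
      simp only [Prod.fst_add, Prod.snd_add] at this; omega

theorem taxiStep_stairStep {p : ℤ × ℤ} (h₁ : Even p.1) (h₂ : Even p.2) (b : Bool) :
    taxiStep p (p + stairStep b) ∧
      taxiStep (p + stairStep b) (p + stairStep b + stairStep b) := by
  cases b <;> simp [taxiStep, stairStep, Prod.ext_iff, h₁, h₂]

theorem even_add_stairStep_add_stairStep {p : ℤ × ℤ} (h₁ : Even p.1) (h₂ : Even p.2)
    (b : Bool) :
    Even (p + stairStep b + stairStep b).1 ∧ Even (p + stairStep b + stairStep b).2 := by
  cases b <;> simp [stairStep, h₁, h₂]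

theorem isChain_taxiStep_stairWalk (bs : List Bool) {p : ℤ × ℤ} (h₁ : Even p.1)
    (h₂ : Even p.2) :
    (stairWalk bs p).IsChain taxiStep := by
  induction bs generalizing p with
  | nil => exact List.isChain_singleton p
  | cons b bs ih =>
    obtain ⟨t, ht⟩ := stairWalk_eq_cons bs (p + stairStep b + stairStep b)
    obtain ⟨s₁, s₂⟩ := taxiStep_stairStep h₁ h₂ b
    obtain ⟨e₁, e₂⟩ := even_add_stairStep_add_stairStep h₁ h₂ b
    rw [stairWalk, ht, List.isChain_cons_cons, List.isChain_cons_cons, ← ht]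
    exact ⟨s₁, s₂, ih e₁ e₂⟩

theorem stairWalk_getD_odd (bs : List Bool) (p : ℤ × ℤ) (k : ℕ)
    (hk : 2 * k + 2 < (stairWalk bs p).length) :
    ∃ b, (stairWalk bs p).getD (2 * k + 1) 0 = (stairWalk bs p).getD (2 * k) 0 + stairStep b ∧
      (stairWalk bs p).getD (2 * k + 2) 0 = (stairWalk bs p).getD (2 * k + 1) 0 + stairStep b := by
  induction bs generalizing p k with
  | nil => simp [stairWalk_length] at hk
  | cons b bs ih =>
    cases k with
    | zero => exact ⟨b, rfl, stairWalk_getD_zero _ _⟩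
    | succ k =>
      rw [stairWalk_length] at hk
      exact ih _ k (by rw [stairWalk_length]; simp at hk; omega)

theorem not_turnAt_stairWalk_odd (bs : List Bool) (p : ℤ × ℤ) (k : ℕ)
    (hk : 2 * k + 2 < (stairWalk bs p).length) : ¬ turnAt (stairWalk bs p) (2 * k + 1) := by
  obtain ⟨b, hb₁, hb₂⟩ := stairWalk_getD_odd bs p k hk
  simp only [turnAt, Nat.add_sub_cancel, hb₂, hb₁, add_sub_cancel_left]
  cases b <;> simp [perp, stairStep]

theorem stairWalk_mem_originWalks (bs : List Bool) :
    stairWalk bs 0 ∈ originWalks (2 * bs.length) := by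
  refine ⟨⟨?_, stairWalk_nodup bs 0, ?_, ?_⟩, stairWalk_length bs 0,
    stairWalk_getD_zero bs 0⟩
  · simp [← List.length_pos_iff, stairWalk_length]
  · exact (List.isChain_iff_getD 0).1 (isChain_taxiStep_stairWalk bs Even.zero Even.zero)
  · rintro i hi₁ hi₂ ⟨t₁, t₂⟩
    obtain ⟨k, rfl | rfl⟩ := Nat.even_or_odd' i
    · exact not_turnAt_stairWalk_odd bs 0 k (by omega) t₂
    · exact not_turnAt_stairWalk_odd bs 0 k (by omega) t₁

theorem two_pow_le_taxiCount (n : ℕ) : 2 ^ n ≤ taxiCount (2 * n) := by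
  have hinj : Function.Injective fun v : Fin n → Bool => stairWalk (List.ofFn v) 0 :=
    (stairWalk_injective 0).comp List.ofFn_injective
  calc 2 ^ n = (Set.range fun v : Fin n → Bool => stairWalk (List.ofFn v) 0).ncard := by
        rw [← Set.image_univ, Set.ncard_image_of_injective _ hinj, Set.ncard_univ]; simp
    _ ≤ taxiCount (2 * n) := Set.ncard_le_ncard
        (Set.range_subset_iff.2 fun v => by simpa using stairWalk_mem_originWalks (List.ofFn v))
        (originWalks_finite _)

theorem le_of_tendsto_rpow_one_div_of_le_mul_pow {a : ℕ → ℝ} {μ C r : ℝ} (hC : 0 < C)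
    (hr : 0 ≤ r) (ha : ∀ n, 0 ≤ a n) (hle : ∀ n, a n ≤ C * r ^ n)
    (hμ : Tendsto (fun n : ℕ => a n ^ ((1 : ℝ) / n)) atTop (𝓝 μ)) : μ ≤ r := by
  have hlim : Tendsto (fun n : ℕ => C ^ ((1 : ℝ) / n) * r) atTop (𝓝 r) := by
    simpa using ((tendsto_const_nhds (x := C)).rpow tendsto_one_div_atTop_nhds_zero_nat
      (Or.inl hC.ne')).mul_const r
  refine le_of_tendsto_of_tendsto hμ hlim (eventually_atTop.2 ⟨1, fun n hn => ?_⟩)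
  calc a n ^ ((1 : ℝ) / n) ≤ (C * r ^ n) ^ ((1 : ℝ) / n) := by gcongr; exact ha n; exact hle n
    _ = C ^ ((1 : ℝ) / n) * r := by
      rw [Real.mul_rpow hC.le (by positivity), one_div, Real.pow_rpow_inv_natCast hr (by omega)]

theorem le_of_tendsto_rpow_one_div_of_pow_le {a : ℕ → ℝ} {μ r : ℝ} {k : ℕ} (hk : k ≠ 0)
    (hr : 0 ≤ r) (hle : ∀ n, r ^ (k * n) ≤ a (k * n))
    (hμ : Tendsto (fun n : ℕ => a n ^ ((1 : ℝ) / n)) atTop (𝓝 μ)) : r ≤ μ := by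
  have hk' : Tendsto (k * ·) atTop atTop :=
    tendsto_atTop_mono (fun n => Nat.le_mul_of_pos_left n (Nat.pos_of_ne_zero hk)) tendsto_id
  refine ge_of_tendsto (hμ.comp hk') (eventually_atTop.2 ⟨1, fun n hn => ?_⟩)
  calc r = (r ^ (k * n)) ^ ((1 : ℝ) / (k * n : ℕ)) := by
        rw [one_div, Real.pow_rpow_inv_natCast hr (by positivity)]
    _ ≤ a (k * n) ^ ((1 : ℝ) / (k * n : ℕ)) := by gcongr; exact hle n

/-- The taxi walk connective constant `μ_taxi = lim_{n→∞} c_n^{1/n}`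
satisfies `√2 ≤ μ_taxi ≤ (1 + √5)/2`. -/
theorem muTaxi_trivial_bounds (μ : ℝ)
    (hμ : Filter.Tendsto (fun n : ℕ => (taxiCount n : ℝ) ^ ((1 : ℝ) / (n : ℝ)))
      Filter.atTop (nhds μ)) :
    Real.sqrt 2 ≤ μ ∧ μ ≤ (1 + Real.sqrt 5) / 2 := by
  refine ⟨le_of_tendsto_rpow_one_div_of_pow_le two_ne_zero (Real.sqrt_nonneg 2)
    (fun n => ?_) hμ, le_of_tendsto_rpow_one_div_of_le_mul_pow two_pos goldenRatio_pos.le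
    (fun n => Nat.cast_nonneg _) taxiCount_le_two_mul_goldenRatio_pow hμ⟩
  rw [pow_mul, Real.sq_sqrt zero_le_two]
  exact_mod_cast two_pow_le_taxiCount n
end

section
/- As an identity of formal power series, B(x)·(1 − A(x)) = 1, where B(x) = Σ_{k≥0} b_k x^k and A(x) = Σ_{ℓ≥1} a_ℓ x^ℓ; equivalently B(x) = 1/(1 − A(x)). -/
open Filter

/-!
Cutting a bridge of length `n ≥ 1` at its first cutvertex `v_t` gives an irreducible bridge
`v_0, …, v_t` of length `t` and the bridge `f_{v_t}(v_t, …, v_n)` of length `n - t`; conversely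
gluing a bridge to the end of an irreducible bridge `p` (undoing `f`) gives a bridge whose first
cutvertex is the last vertex of `p`. So `b_n = ∑_{t=1}^{n} a_t b_{n-t}` for `n ≥ 1`
(with `b_0 = 1` accounting for the irreducible bridges themselves), i.e. `B = 1 + A B`.

The geometric input is that in a bridge, `v_j` is a cutvertex exactly when both edges at `v_j`
point in the `+x` direction and a vertical line separates `v_0, …, v_j` from the rest. In
particular, if `v_t` is a cutvertex, the cutvertices of `v_0, …, v_t` are those of the whole
bridge that precede `v_t`.
-/

namespace List

variable {α : Type*} {l : List α} {d : α}

lemma getD_take {n i : ℕ} (h : i < n) : (l.take n).getD i d = l.getD i d := by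
  simp [getD_eq_getElem?_getD, h]

lemma getD_drop (n i : ℕ) : (l.drop n).getD i d = l.getD (n + i) d := by
  simp [getD_eq_getElem?_getD, getElem?_drop]

lemma getD_map_of_lt {β : Type*} {f : α → β} {d' : β} {i : ℕ} (h : i < l.length) :
    (l.map f).getD i d' = f (l.getD i d) := by
  simp [getD_eq_getElem?_getD, h]

end List

/-- This is `f_p` when `p.2` is even (`normMap_eq_recenter`), the only case met at a cutvertex;
the sign makes the inverse uniform in `p`. -/
def recenter (p : ℤ × ℤ) : ℤ × ℤ ≃ ℤ × ℤ where
  toFun q := (q.1 - p.1, (if Even p.1 then 1 else -1) * (q.2 - p.2))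
  invFun q := (q.1 + p.1, (if Even p.1 then 1 else -1) * q.2 + p.2)
  left_inv q := by split_ifs <;> simp
  right_inv q := by split_ifs <;> simp

lemma recenter_fst (p q : ℤ × ℤ) : (recenter p q).1 = q.1 - p.1 := rfl

lemma recenter_symm_fst (p q : ℤ × ℤ) : ((recenter p).symm q).1 = q.1 + p.1 := rfl

lemma recenter_self (p : ℤ × ℤ) : recenter p p = 0 := by
  simp [recenter]

lemma recenter_symm_zero (p : ℤ × ℤ) : (recenter p).symm 0 = p := by
  rw [Equiv.symm_apply_eq, recenter_self]

lemma recenter_add_right (p : ℤ × ℤ) : recenter p (p + (1, 0)) = (1, 0) := by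
  simp [recenter]

lemma recenter_snd_eq_iff (p a b : ℤ × ℤ) :
    (recenter p a).2 = (recenter p b).2 ↔ a.2 = b.2 := by
  simp only [recenter, Equiv.coe_fn_mk]
  split_ifs <;> omega

lemma recenter_symm_one_zero (p : ℤ × ℤ) : (recenter p).symm (1, 0) = p + (1, 0) := by
  rw [Equiv.symm_apply_eq, recenter_add_right]

lemma recenter_symm_snd_eq_iff (p a b : ℤ × ℤ) :
    ((recenter p).symm a).2 = ((recenter p).symm b).2 ↔ a.2 = b.2 := by
  rw [← recenter_snd_eq_iff p, Equiv.apply_symm_apply, Equiv.apply_symm_apply]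

lemma normMap_eq_recenter {p : ℤ × ℤ} (hp : Even p.2) : normMap p = recenter p := by
  funext q
  by_cases h : Even p.1 <;> simp [normMap, recenter, h, hp, ← sub_eq_neg_add]

def IsTaxiSymmetry (e : ℤ × ℤ ≃ ℤ × ℤ) : Prop :=
  (∀ u v, taxiStep (e u) (e v) ↔ taxiStep u v) ∧
    ∀ a b c d, perp (e a - e b) (e c - e d) ↔ perp (a - b) (c - d)

lemma IsTaxiSymmetry.symm {e : ℤ × ℤ ≃ ℤ × ℤ} (he : IsTaxiSymmetry e) :
    IsTaxiSymmetry e.symm :=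
  ⟨fun u v => by rw [← he.1, e.apply_symm_apply, e.apply_symm_apply],
    fun a b c d => by rw [← he.2]; simp only [e.apply_symm_apply]⟩

lemma isTaxiSymmetry_recenter {p : ℤ × ℤ} (hp : Even p.2) : IsTaxiSymmetry (recenter p) := by
  obtain ⟨k, hk⟩ := hp
  refine ⟨fun u v => ?_, fun a b c d => ?_⟩
  -- translating by an odd `p.1` reverses the vertical edges, and the reflection undoes this
  · by_cases h : Even p.1 <;>
      simp [taxiStep, recenter, h, Prod.ext_iff, Int.even_iff, Int.odd_iff] <;>
      simp only [Int.even_iff] at h <;> omega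
  · by_cases h : Even p.1 <;> simp only [perp, recenter, h, Equiv.coe_fn_mk, Prod.fst_sub,
      Prod.snd_sub, if_true, if_false] <;> constructor <;> intro h' <;> linarith

section Walks

variable {l : List (ℤ × ℤ)}

lemma turnAt_take {n i : ℕ} (h : i + 1 < n) : turnAt (l.take n) i ↔ turnAt l i := by
  simp (disch := omega) only [turnAt, List.getD_take]

lemma turnAt_drop {n i : ℕ} (hi : 1 ≤ i) : turnAt (l.drop n) i ↔ turnAt l (n + i) := by
  simp only [turnAt, List.getD_drop, show n + (i - 1) = n + i - 1 by omega, Nat.add_assoc]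

lemma turnAt_map {e : ℤ × ℤ ≃ ℤ × ℤ} (he : IsTaxiSymmetry e) {i : ℕ} (hi : 1 ≤ i)
    (h : i + 1 < l.length) : turnAt (l.map e) i ↔ turnAt l i := by
  simp (disch := omega) only [turnAt, List.getD_map_of_lt (d := (0 : ℤ × ℤ)), he.2]

lemma IsTaxiWalk.take (hl : IsTaxiWalk l) {n : ℕ} (hn : 0 < n) : IsTaxiWalk (l.take n) := by
  obtain ⟨hne, hnd, hstep, hturn⟩ := hl
  have := List.length_pos_iff.mpr hne
  refine ⟨List.ne_nil_of_length_pos (by simp; omega), (List.take_sublist n l).nodup hnd,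
    fun i hi => ?_, fun i hi h2 => ?_⟩
  · simp only [List.length_take] at hi
    simp (disch := omega) only [List.getD_take]
    exact hstep i (by omega)
  · simp only [List.length_take] at h2
    rw [turnAt_take (by omega), turnAt_take (by omega)]
    exact hturn i hi (by omega)

lemma IsTaxiWalk.drop (hl : IsTaxiWalk l) {n : ℕ} (hn : n < l.length) :
    IsTaxiWalk (l.drop n) := by
  obtain ⟨-, hnd, hstep, hturn⟩ := hl
  refine ⟨by simpa [← List.length_pos_iff] using hn, (List.drop_sublist n l).nodup hnd,
    fun i hi => ?_, fun i hi h2 => ?_⟩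
  · simp only [List.length_drop] at hi
    rw [List.getD_drop, List.getD_drop, ← Nat.add_assoc]
    exact hstep (n + i) (by omega)
  · simp only [List.length_drop] at h2
    rw [turnAt_drop (by omega), turnAt_drop (by omega), ← Nat.add_assoc]
    exact hturn (n + i) (by omega) (by omega)

lemma IsTaxiWalk.map {e : ℤ × ℤ ≃ ℤ × ℤ} (he : IsTaxiSymmetry e) (hl : IsTaxiWalk l) :
    IsTaxiWalk (l.map e) := by
  obtain ⟨hne, hnd, hstep, hturn⟩ := hl
  refine ⟨by simpa using hne, hnd.map e.injective, fun i hi => ?_, fun i hi h2 => ?_⟩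
  · simp only [List.length_map] at hi
    rw [List.getD_map_of_lt (d := 0) (by omega), List.getD_map_of_lt (d := 0) hi, he.1]
    exact hstep i hi
  · simp only [List.length_map] at h2
    rw [turnAt_map he hi (by omega), turnAt_map he (by omega) (by omega)]
    exact hturn i hi h2

/-- For bridges this is `IsCutAt` (`IsBridge.isCutAt_iff`): both edges at `v_j` point in the
`+x` direction and the vertical line through `v_j + (1/2, 0)` separates the walk. -/
def IsCutPoint (l : List (ℤ × ℤ)) (j : ℕ) : Prop :=
  0 < j ∧ j + 1 < l.length ∧
    (l.getD j 0 = l.getD (j - 1) 0 + (1, 0) ∧ ∀ k ≤ j, (l.getD k 0).1 ≤ (l.getD j 0).1) ∧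
    (l.getD (j + 1) 0 = l.getD j 0 + (1, 0) ∧
      ∀ k, j < k → k < l.length → (l.getD j 0).1 < (l.getD k 0).1)

lemma IsCutPoint.not_turnAt {j : ℕ} (hc : IsCutPoint l j) : ¬ turnAt l j := by
  obtain ⟨-, -, ⟨hin, -⟩, hout, -⟩ := hc
  unfold turnAt perp
  rw [hout, hin]
  simp

lemma IsCutPoint.nodup {j : ℕ} (hc : IsCutPoint l j) (h₁ : (l.take (j + 1)).Nodup)
    (h₂ : (l.drop j).Nodup) : l.Nodup := by
  obtain ⟨-, hjl, ⟨-, hleft⟩, -, hright⟩ := hc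
  have hx₁ : ∀ a ∈ l.take (j + 1), a.1 ≤ (l.getD j 0).1 := by
    rw [List.forall_mem_iff_getElem]
    intro i hi
    rw [← List.getD_eq_getElem (d := 0), List.getD_take (by simp at hi; omega)]
    exact hleft i (by simp at hi; omega)
  have hx₂ : ∀ b ∈ l.drop (j + 1), (l.getD j 0).1 < b.1 := by
    rw [List.forall_mem_iff_getElem]
    intro i hi
    rw [← List.getD_eq_getElem (d := 0), List.getD_drop]
    exact hright _ (by omega) (by simp at hi; omega)
  rw [← List.take_append_drop (j + 1) l, List.nodup_append]
  refine ⟨h₁, (List.drop_sublist_drop_left l (by omega)).nodup h₂, fun a ha b hb hab => ?_⟩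
  have := hx₁ a ha
  have := hx₂ b hb
  rw [hab] at *
  omega

lemma IsCutPoint.isTaxiWalk {j : ℕ} (hc : IsCutPoint l j) (h₁ : IsTaxiWalk (l.take (j + 1)))
    (h₂ : IsTaxiWalk (l.drop j)) : IsTaxiWalk l := by
  refine ⟨List.ne_nil_of_length_pos (by have := hc.2.1; omega), hc.nodup h₁.2.1 h₂.2.1,
    fun i hi => ?_, fun i hi h2 ⟨t₁, t₂⟩ => ?_⟩
  · rcases lt_or_ge i j with hij | hij
    · have := h₁.2.2.1 i (by simp; omega)
      rwa [List.getD_take (by omega), List.getD_take (by omega)] at this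
    · have := h₂.2.2.1 (i - j) (by simp; omega)
      rwa [List.getD_drop, List.getD_drop, ← Nat.add_assoc, Nat.add_sub_cancel' hij] at this
  · rcases lt_trichotomy (i + 1) j with hij | hij | hij
    · rw [← turnAt_take (n := j + 1) (by omega)] at t₁ t₂
      exact h₁.2.2.2 i hi (by simp; omega) ⟨t₁, t₂⟩
    · exact hc.not_turnAt (hij ▸ t₂)
    · obtain rfl | hij := eq_or_lt_of_le (show j ≤ i by omega)
      · exact hc.not_turnAt t₁
      · obtain ⟨m, rfl⟩ := Nat.exists_eq_add_of_lt hij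
        rw [show j + m + 1 = j + (m + 1) by omega, ← turnAt_drop (by omega)] at t₁
        rw [show j + m + 1 + 1 = j + (m + 2) by omega, ← turnAt_drop (by omega)] at t₂
        exact h₂.2.2.2 (m + 1) (by omega) (by simp; omega) ⟨t₁, t₂⟩

end Walks

section Bridges

variable {l : List (ℤ × ℤ)}

lemma even_snd_of_taxiStep_add_right {u : ℤ × ℤ} (h : taxiStep u (u + (1, 0))) : Even u.2 := by
  rcases h with ⟨he, -⟩ | ⟨-, h⟩ | ⟨-, h⟩ | ⟨-, h⟩
  · exact he
  · simp [Prod.ext_iff] at h; omega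
  · simp [Prod.ext_iff] at h
  · simp [Prod.ext_iff] at h

lemma IsBridge.getD_last (hl : IsBridge l) :
    l.getD (l.length - 1) 0 = l.getD (l.length - 2) 0 + (1, 0) := by
  obtain ⟨⟨-, -, hstep, -⟩, hlen, -, -, -, hy, hmax⟩ := hl
  have hs := hstep (l.length - 2) (by omega)
  have hm := hmax (l.length - 2) (by omega)
  rw [show l.length - 2 + 1 = l.length - 1 by omega] at hs
  rcases hs with ⟨-, h⟩ | ⟨-, h⟩ | ⟨-, h⟩ | ⟨-, h⟩ <;> rw [h] at hm hy
  · rw [h]; simp [Prod.ext_iff]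
  all_goals simp at hm hy

lemma IsBridge.even_getD_last (hl : IsBridge l) : Even (l.getD (l.length - 1) 0).2 := by
  have hlen := hl.2.1
  have hs := hl.1.2.2.1 (l.length - 2) (by omega)
  rw [show l.length - 2 + 1 = l.length - 1 by omega] at hs
  rw [hl.getD_last] at hs ⊢
  simpa using even_snd_of_taxiStep_add_right hs

lemma isBridge_take_iff (hl : IsBridge l) {j : ℕ} (hj : 0 < j) (hjl : j < l.length) :
    IsBridge (l.take (j + 1)) ↔
      l.getD j 0 = l.getD (j - 1) 0 + (1, 0) ∧
        ∀ k ≤ j, (l.getD k 0).1 ≤ (l.getD j 0).1 := by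
  have hlen : (l.take (j + 1)).length = j + 1 := by simp; omega
  have hlast : j + 1 - 2 = j - 1 := by omega
  constructor
  · intro hb
    have hstep := hb.getD_last
    have hmax := hb.2.2.2.2.2.2
    simp (disch := omega) only [hlen, Nat.add_sub_cancel, hlast, List.getD_take] at hstep hmax
    refine ⟨hstep, fun k hk => ?_⟩
    simpa (disch := omega) only [List.getD_take] using hmax k (by omega)
  · rintro ⟨hstep, hmax⟩
    obtain ⟨hw, -, h0, h1, hx, -, -⟩ := hl
    refine ⟨hw.take (by omega), by omega, ?_, ?_, fun k hk hkl => ?_, ?_, fun k hk => ?_⟩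
    · rwa [List.getD_take (by omega)]
    · rwa [List.getD_take (by omega)]
    · rw [hlen] at hkl
      rw [List.getD_take hkl]
      exact hx k hk (by omega)
    · simp (disch := omega) only [hlen, Nat.add_sub_cancel, hlast, List.getD_take, hstep]
      simp
    · rw [hlen] at hk ⊢
      simp (disch := omega) only [Nat.add_sub_cancel, List.getD_take]
      exact hmax k (by omega)

lemma isBridge_map_recenter_drop_iff (hl : IsBridge l) {j : ℕ} (hjl : j + 1 < l.length)
    (hstep : l.getD (j + 1) 0 = l.getD j 0 + (1, 0)) :
    IsBridge ((l.drop j).map (recenter (l.getD j 0))) ↔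
      ∀ k, j < k → k < l.length → (l.getD j 0).1 < (l.getD k 0).1 := by
  have hlen : ((l.drop j).map (recenter (l.getD j 0))).length = l.length - j := by simp
  have hget : ∀ k < l.length - j, ((l.drop j).map (recenter (l.getD j 0))).getD k 0 =
      recenter (l.getD j 0) (l.getD (j + k) 0) :=
    fun k hk => by rw [List.getD_map_of_lt (d := 0) (by simpa using hk), List.getD_drop]
  constructor
  · intro hb k hjk hkl
    have := hb.2.2.2.2.1 (k - j) (by omega) (by omega)
    rw [hget _ (by omega), recenter_fst, Nat.add_sub_cancel' hjk.le] at this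
    omega
  · intro hright
    obtain ⟨hw, -, -, -, -, hy, hmax⟩ := hl
    have heven := even_snd_of_taxiStep_add_right (hstep ▸ hw.2.2.1 j hjl)
    refine ⟨(hw.drop (by omega)).map (isTaxiSymmetry_recenter heven), by omega, ?_, ?_,
      fun k hk hkl => ?_, ?_, fun k hk => ?_⟩
    · rw [hget 0 (by omega), Nat.add_zero, recenter_self]
      rfl
    · rw [hget 1 (by omega), hstep, recenter_add_right]
    · rw [hlen] at hkl
      rw [hget k hkl, recenter_fst]
      have := hright (j + k) (by omega) (by omega)
      omega
    · rw [hlen, hget _ (by omega), hget _ (by omega), recenter_snd_eq_iff,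
        show j + (l.length - j - 1) = l.length - 1 by omega,
        show j + (l.length - j - 2) = l.length - 2 by omega]
      exact hy
    · rw [hlen] at hk ⊢
      rw [hget _ hk, hget _ (by omega), recenter_fst, recenter_fst,
        show j + (l.length - j - 1) = l.length - 1 by omega]
      have := hmax (j + k) (by omega)
      omega

lemma IsBridge.isCutAt_iff (hl : IsBridge l) {j : ℕ} : IsCutAt l j ↔ IsCutPoint l j := by
  constructor
  · rintro ⟨hj, hjl, hpre, hstep, hsuf⟩
    have heven := even_snd_of_taxiStep_add_right (hstep ▸ hl.1.2.2.1 j hjl)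
    rw [normMap_eq_recenter heven, isBridge_map_recenter_drop_iff hl hjl hstep] at hsuf
    exact ⟨hj, hjl, (isBridge_take_iff hl hj (by omega)).1 hpre, hstep, hsuf⟩
  · rintro ⟨hj, hjl, hpre, hstep, hsuf⟩
    have heven := even_snd_of_taxiStep_add_right (hstep ▸ hl.1.2.2.1 j hjl)
    refine ⟨hj, hjl, (isBridge_take_iff hl hj (by omega)).2 hpre, hstep, ?_⟩
    rwa [normMap_eq_recenter heven, isBridge_map_recenter_drop_iff hl hjl hstep]

lemma IsCutPoint.take_iff {i j : ℕ} (hi : IsCutPoint l i) (hji : j < i) :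
    IsCutPoint (l.take (i + 1)) j ↔ IsCutPoint l j := by
  obtain ⟨-, hil, ⟨-, hleft_i⟩, -, hright_i⟩ := hi
  have hlen : (l.take (i + 1)).length = i + 1 := by simp; omega
  have hget : ∀ k < i + 1, (l.take (i + 1)).getD k 0 = l.getD k 0 := fun k hk => List.getD_take hk
  unfold IsCutPoint
  rw [hlen, hget j (by omega), hget (j - 1) (by omega), hget (j + 1) (by omega)]
  constructor
  · rintro ⟨hj, -, ⟨hin, hleft⟩, hout, hright⟩
    refine ⟨hj, by omega, ⟨hin, fun k hk => ?_⟩, hout, fun k hjk hkl => ?_⟩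
    · rw [← hget k (by omega)]
      exact hleft k hk
    · rcases le_or_gt k i with hki | hki
      · rw [← hget k (by omega)]
        exact hright k hjk (by omega)
      · exact (hleft_i j hji.le).trans_lt (hright_i k hki hkl)
  · rintro ⟨hj, -, ⟨hin, hleft⟩, hout, hright⟩
    refine ⟨hj, by omega, ⟨hin, fun k hk => ?_⟩, hout, fun k hjk hkl => ?_⟩
    · rw [hget k (by omega)]
      exact hleft k hk
    · rw [hget k hkl]
      exact hright k hjk (by omega)

end Bridges

section Glue

def glue (p q : List (ℤ × ℤ)) : List (ℤ × ℤ) :=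
  p ++ (q.drop 1).map (recenter (p.getD (p.length - 1) 0)).symm

variable {p q : List (ℤ × ℤ)}

lemma length_glue : (glue p q).length = p.length + (q.length - 1) := by simp [glue]

lemma take_glue : (glue p q).take p.length = p := List.take_left

lemma getD_glue_of_lt {k : ℕ} (hk : k < p.length) : (glue p q).getD k 0 = p.getD k 0 :=
  List.getD_append _ _ _ _ hk

lemma drop_glue (hp : p ≠ []) (hq : q ≠ []) (hq0 : q.getD 0 0 = (0, 0)) :
    (glue p q).drop (p.length - 1) = q.map (recenter (p.getD (p.length - 1) 0)).symm := by
  obtain ⟨a, q, rfl⟩ := List.exists_cons_of_ne_nil hq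
  obtain rfl : a = 0 := hq0
  rw [glue, List.drop_append_of_le_length (by omega), List.drop_length_sub_one hp,
    List.getLast_eq_getElem, ← List.getD_eq_getElem (d := 0)]
  simp [recenter_symm_zero]

lemma getD_glue_add (hp : p ≠ []) (hq : q ≠ []) (hq0 : q.getD 0 0 = (0, 0)) {k : ℕ}
    (hk : k < q.length) :
    (glue p q).getD (p.length - 1 + k) 0 =
      (recenter (p.getD (p.length - 1) 0)).symm (q.getD k 0) := by
  rw [← List.getD_drop, drop_glue hp hq hq0, List.getD_map_of_lt hk]

lemma map_recenter_drop_glue (hp : p ≠ []) (hq : q ≠ []) (hq0 : q.getD 0 0 = (0, 0)) :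
    ((glue p q).drop (p.length - 1)).map (recenter (p.getD (p.length - 1) 0)) = q := by
  rw [drop_glue hp hq hq0, List.map_map, Equiv.self_comp_symm, List.map_id]

lemma glue_take_map_recenter_drop (l : List (ℤ × ℤ)) {i : ℕ} (hi : i < l.length) :
    glue (l.take (i + 1)) ((l.drop i).map (recenter (l.getD i 0))) = l := by
  have hlen : (l.take (i + 1)).length - 1 = i := by simp; omega
  rw [glue, hlen, List.getD_take (by omega), ← List.map_drop, List.drop_drop, List.map_map,
    Equiv.symm_comp_self, List.map_id, Nat.add_comm, List.take_append_drop]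

lemma isCutPoint_glue (hp : IsBridge p) (hq : IsBridge q) :
    IsCutPoint (glue p q) (p.length - 1) := by
  have hpl := hp.2.1
  have hql := hq.2.1
  have hlen := length_glue (p := p) (q := q)
  have hright := fun k (hk : k < q.length) => getD_glue_add hp.1.1 hq.1.1 hq.2.2.1 hk
  refine ⟨by omega, by omega, ⟨?_, fun k hk => ?_⟩, ?_, fun k hk hkl => ?_⟩
  · rw [getD_glue_of_lt (by omega), getD_glue_of_lt (by omega), hp.getD_last,
      show p.length - 1 - 1 = p.length - 2 by omega]
  · rw [getD_glue_of_lt (by omega), getD_glue_of_lt (by omega)]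
    exact hp.2.2.2.2.2.2 k (by omega)
  · rw [hright 1 (by omega), getD_glue_of_lt (by omega), hq.2.2.2.1, recenter_symm_one_zero]
  · obtain ⟨k, rfl⟩ := Nat.exists_eq_add_of_lt hk
    rw [getD_glue_of_lt (by omega), Nat.add_assoc, hright _ (by omega), recenter_symm_fst]
    have := hq.2.2.2.2.1 (k + 1) (by omega) (by omega)
    omega

lemma isTaxiWalk_glue (hp : IsBridge p) (hq : IsBridge q) : IsTaxiWalk (glue p q) := by
  refine (isCutPoint_glue hp hq).isTaxiWalk ?_ ?_
  · rw [Nat.sub_add_cancel (by have := hp.2.1; omega), take_glue]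
    exact hp.1
  · rw [drop_glue hp.1.1 hq.1.1 hq.2.2.1]
    exact hq.1.map (isTaxiSymmetry_recenter hp.even_getD_last).symm

lemma isBridge_glue (hp : IsBridge p) (hq : IsBridge q) : IsBridge (glue p q) := by
  have hpl := hp.2.1
  have hql := hq.2.1
  have hlen := length_glue (p := p) (q := q)
  have hright := fun k (hk : k < q.length) => getD_glue_add hp.1.1 hq.1.1 hq.2.2.1 hk
  have hc := isCutPoint_glue hp hq
  have hlast : (glue p q).length - 1 = p.length - 1 + (q.length - 1) := by omega
  have hlast' : (glue p q).length - 2 = p.length - 1 + (q.length - 2) := by omega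
  have hx_last : ((glue p q).getD (p.length - 1) 0).1 <
      ((glue p q).getD ((glue p q).length - 1) 0).1 := hc.2.2.2.2 _ (by omega) (by omega)
  refine ⟨isTaxiWalk_glue hp hq, by omega, ?_, ?_, fun k hk hkl => ?_, ?_, fun k hk => ?_⟩
  · rw [getD_glue_of_lt (by omega)]
    exact hp.2.2.1
  · rw [getD_glue_of_lt (by omega)]
    exact hp.2.2.2.1
  · rcases lt_or_ge k p.length with hkp | hkp
    · rw [getD_glue_of_lt hkp]
      exact hp.2.2.2.2.1 k hk hkp
    · have h1 := hc.2.2.2.2 k (by omega) hkl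
      have h2 := hp.2.2.2.2.1 (p.length - 1) (by omega) (by omega)
      rw [getD_glue_of_lt (by omega)] at h1
      omega
  · rw [hlast, hlast', hright _ (by omega), hright _ (by omega), recenter_symm_snd_eq_iff]
    exact hq.2.2.2.2.2.1
  · rcases le_or_gt k (p.length - 1) with hkp | hkp
    · exact (hc.2.2.1.2 k hkp).trans hx_last.le
    · obtain ⟨k, rfl⟩ := Nat.exists_eq_add_of_lt hkp
      rw [hlast, Nat.add_assoc, hright _ (by omega), hright _ (by omega), recenter_symm_fst,
        recenter_symm_fst]
      have := hq.2.2.2.2.2.2 (k + 1) (by omega)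
      omega

end Glue

section Decomposition

variable {l p q : List (ℤ × ℤ)} {t : ℕ}

lemma IsBridge.isCutAt_take_iff (hl : IsBridge l) (ht : IsCutAt l t) {j : ℕ} (hjt : j < t) :
    IsCutAt (l.take (t + 1)) j ↔ IsCutAt l j := by
  rw [ht.2.2.1.isCutAt_iff, hl.isCutAt_iff, (hl.isCutAt_iff.1 ht).take_iff hjt]

lemma IsCutAt.isBridge_map_recenter_drop (hl : IsTaxiWalk l) (ht : IsCutAt l t) :
    IsBridge ((l.drop t).map (recenter (l.getD t 0))) := by
  obtain ⟨-, htl, -, hstep, hsuf⟩ := ht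
  rwa [← normMap_eq_recenter (even_snd_of_taxiStep_add_right (hstep ▸ hl.2.2.1 t htl))]

lemma IsBridge.isIrreducibleBridge_take (hl : IsBridge l) (ht : IsCutAt l t)
    (hmin : ∀ j < t, ¬ IsCutAt l j) : IsIrreducibleBridge (l.take (t + 1)) := by
  refine ⟨ht.2.2.1, fun j hj => ?_⟩
  have hjt : j < t := by have := hj.2.1; simp at this; omega
  exact hmin j hjt ((hl.isCutAt_take_iff ht hjt).1 hj)

lemma isCutAt_glue (hp : IsBridge p) (hq : IsBridge q) : IsCutAt (glue p q) (p.length - 1) :=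
  (isBridge_glue hp hq).isCutAt_iff.2 (isCutPoint_glue hp hq)

lemma not_isCutAt_glue (hp : IsIrreducibleBridge p) (hq : IsBridge q) {j : ℕ}
    (hj : j < p.length - 1) : ¬ IsCutAt (glue p q) j := by
  rw [← (isBridge_glue hp.1 hq).isCutAt_take_iff (isCutAt_glue hp.1 hq) hj,
    Nat.sub_add_cancel (by have := hp.1.2.1; omega), take_glue]
  exact hp.2 j

end Decomposition

lemma taxiStep_unique {u v w : ℤ × ℤ} (hv : taxiStep u v) (hw : taxiStep u w)
    (h : v.1 = u.1 ↔ w.1 = u.1) : v = w := by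
  rcases hv with ⟨h₁, rfl⟩ | ⟨h₁, rfl⟩ | ⟨h₁, rfl⟩ | ⟨h₁, rfl⟩ <;>
    rcases hw with ⟨h₂, rfl⟩ | ⟨h₂, rfl⟩ | ⟨h₂, rfl⟩ | ⟨h₂, rfl⟩ <;>
    simp only [Int.even_iff, Int.odd_iff] at h₁ h₂ <;> simp [Prod.ext_iff] at h ⊢ <;> omega

/-- A taxi walk is determined by its start and by which of its steps are vertical. -/
lemma finite_setOf_isTaxiWalk (n : ℕ) (v : ℤ × ℤ) :
    {l | IsTaxiWalk l ∧ l.length = n ∧ l.getD 0 0 = v}.Finite := by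
  refine Set.Finite.of_finite_image (Set.toFinite _)
    (f := fun l (i : Fin n) => decide ((l.getD (i + 1) 0).1 = (l.getD i 0).1)) ?_
  rintro l₁ ⟨hw₁, hl₁, h0₁⟩ l₂ ⟨hw₂, hl₂, h0₂⟩ hf
  have hget : ∀ i < n, l₁.getD i 0 = l₂.getD i 0 := by
    intro i
    induction i with
    | zero => exact fun _ => h0₁.trans h0₂.symm
    | succ k ih =>
      intro hk
      have hvert := congrFun hf ⟨k, by omega⟩
      simp only [decide_eq_decide, ih (by omega)] at hvert
      exact taxiStep_unique (ih (by omega) ▸ hw₁.2.2.1 k (by omega)) (hw₂.2.2.1 k (by omega))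
        hvert
  refine List.ext_getElem (by omega) fun i h₁ h₂ => ?_
  rw [← List.getD_eq_getElem (d := 0), ← List.getD_eq_getElem (d := 0)]
  exact hget i (by omega)

lemma finite_setOf_isBridge (n : ℕ) : {l | IsBridge l ∧ l.length = n}.Finite :=
  (finite_setOf_isTaxiWalk n 0).subset fun _ h => ⟨h.1.1, h.2, h.1.2.2.1⟩

open Finset

noncomputable def bridgeFinset (n : ℕ) : Finset (List (ℤ × ℤ)) :=
  (finite_setOf_isBridge (n + 1)).toFinset

noncomputable def irreducibleBridgeFinset (n : ℕ) : Finset (List (ℤ × ℤ)) :=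
  Set.Finite.toFinset (s := {l | IsIrreducibleBridge l ∧ l.length = n + 1})
    ((finite_setOf_isBridge (n + 1)).subset fun _ h => ⟨h.1.1, h.2⟩)

lemma mem_bridgeFinset {n : ℕ} {l : List (ℤ × ℤ)} :
    l ∈ bridgeFinset n ↔ IsBridge l ∧ l.length = n + 1 :=
  Set.Finite.mem_toFinset _

lemma mem_irreducibleBridgeFinset {n : ℕ} {l : List (ℤ × ℤ)} :
    l ∈ irreducibleBridgeFinset n ↔ IsIrreducibleBridge l ∧ l.length = n + 1 :=
  Set.Finite.mem_toFinset _

lemma bridgeCount_eq_card {n : ℕ} (hn : n ≠ 0) : bridgeCount n = (bridgeFinset n).card := by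
  obtain ⟨n, rfl⟩ := Nat.exists_eq_succ_of_ne_zero hn
  exact Set.ncard_eq_toFinset_card _ _

lemma irrBridgeCount_eq_card {n : ℕ} (hn : n ≠ 0) :
    irrBridgeCount n = (irreducibleBridgeFinset n).card := by
  obtain ⟨n, rfl⟩ := Nat.exists_eq_succ_of_ne_zero hn
  exact Set.ncard_eq_toFinset_card _ _

section FirstCut

open Classical

noncomputable def firstCut (l : List (ℤ × ℤ)) : ℕ :=
  Nat.find (⟨l.length - 1, Or.inr rfl⟩ : ∃ i, IsCutAt l i ∨ i = l.length - 1)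

variable {l : List (ℤ × ℤ)} {t : ℕ}

lemma firstCut_eq_iff :
    firstCut l = t ↔
      (IsCutAt l t ∨ t = l.length - 1) ∧ ∀ j < t, ¬ (IsCutAt l j ∨ j = l.length - 1) :=
  Nat.find_eq_iff _

lemma IsCutAt.lt_length_sub_one {j : ℕ} (h : IsCutAt l j) : j < l.length - 1 := by
  have := h.2.1
  omega

lemma firstCut_eq_iff_of_lt (ht : t < l.length - 1) :
    firstCut l = t ↔ IsCutAt l t ∧ ∀ j < t, ¬ IsCutAt l j := by
  simp only [firstCut_eq_iff, not_or]
  exact ⟨fun h => ⟨h.1.resolve_right (by omega), fun j hj => (h.2 j hj).1⟩,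
    fun h => ⟨Or.inl h.1, fun j hj => ⟨h.2 j hj, by omega⟩⟩⟩

lemma firstCut_eq_length_sub_one_iff : firstCut l = l.length - 1 ↔ ∀ j, ¬ IsCutAt l j := by
  simp only [firstCut_eq_iff, not_or, or_true, true_and]
  exact ⟨fun h j hj => (h j hj.lt_length_sub_one).1 hj, fun h j hj => ⟨h j, by omega⟩⟩

lemma IsBridge.firstCut_mem_Icc (hl : IsBridge l) : firstCut l ∈ Icc 1 (l.length - 1) := by
  have hlen := hl.2.1
  rw [mem_Icc]
  rcases (firstCut_eq_iff.1 rfl).1 with h | h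
  · exact ⟨h.1, h.lt_length_sub_one.le⟩
  · omega

end FirstCut

lemma filter_firstCut_eq_self (n : ℕ) :
    (bridgeFinset n).filter (firstCut · = n) = irreducibleBridgeFinset n := by
  ext l
  simp only [mem_filter, mem_bridgeFinset, mem_irreducibleBridgeFinset, IsIrreducibleBridge]
  constructor
  · rintro ⟨⟨hl, hlen⟩, ht⟩
    exact ⟨⟨hl, firstCut_eq_length_sub_one_iff.1 (by omega)⟩, hlen⟩
  · rintro ⟨⟨hl, hirr⟩, hlen⟩
    refine ⟨⟨hl, hlen⟩, ?_⟩
    rw [← Nat.add_sub_cancel n 1, ← hlen]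
    exact firstCut_eq_length_sub_one_iff.2 hirr

lemma card_filter_firstCut_eq {n t : ℕ} (ht : 0 < t) (htn : t < n) :
    ((bridgeFinset n).filter (firstCut · = t)).card =
      (irreducibleBridgeFinset t).card * (bridgeFinset (n - t)).card := by
  rw [← card_product]
  refine card_nbij' (fun l => (l.take (t + 1), (l.drop t).map (recenter (l.getD t 0))))
    (fun pq => glue pq.1 pq.2) ?_ ?_ ?_ ?_
  · intro l hl
    simp only [mem_coe, mem_filter, mem_bridgeFinset] at hl
    obtain ⟨⟨hl, hlen⟩, hcut⟩ := hl
    obtain ⟨hc, hmin⟩ := (firstCut_eq_iff_of_lt (by omega)).1 hcut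
    simp only [coe_product, Set.mem_prod, mem_coe, mem_bridgeFinset,
      mem_irreducibleBridgeFinset]
    exact ⟨⟨hl.isIrreducibleBridge_take hc hmin, by simp; omega⟩,
      hc.isBridge_map_recenter_drop hl.1, by simp; omega⟩
  · rintro ⟨p, q⟩ hpq
    simp only [coe_product, Set.mem_prod, mem_coe, mem_bridgeFinset,
      mem_irreducibleBridgeFinset] at hpq
    obtain ⟨⟨hp, hpl⟩, hq, hql⟩ := hpq
    simp only [mem_coe, mem_filter, mem_bridgeFinset]
    have hlen : (glue p q).length = n + 1 := by rw [length_glue]; omega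
    refine ⟨⟨isBridge_glue hp.1 hq, hlen⟩,
      (firstCut_eq_iff_of_lt (by omega)).2 ⟨?_, ?_⟩⟩
    · simpa [hpl] using isCutAt_glue hp.1 hq
    · exact fun j hj => not_isCutAt_glue hp hq (by omega)
  · intro l hl
    simp only [mem_coe, mem_filter, mem_bridgeFinset] at hl
    exact glue_take_map_recenter_drop l (by omega)
  · rintro ⟨p, q⟩ hpq
    simp only [coe_product, Set.mem_prod, mem_coe, mem_bridgeFinset,
      mem_irreducibleBridgeFinset] at hpq
    obtain ⟨⟨hp, hpl⟩, hq, hql⟩ := hpq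
    have ht : t = p.length - 1 := by omega
    simp only [Prod.mk.injEq]
    rw [ht, Nat.sub_add_cancel (by omega), take_glue, getD_glue_of_lt (by omega),
      map_recenter_drop_glue hp.1.1.1 hq.1.1 hq.2.2.1]
    exact ⟨rfl, rfl⟩

theorem bridgeCount_eq_sum_antidiagonal {n : ℕ} (hn : n ≠ 0) :
    bridgeCount n = ∑ ij ∈ antidiagonal n, irrBridgeCount ij.1 * bridgeCount ij.2 := by
  have hmaps : Set.MapsTo firstCut (bridgeFinset n) (Icc 1 n) := fun l hl => by
    obtain ⟨hl, hlen⟩ := mem_bridgeFinset.1 hl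
    simpa [hlen] using hl.firstCut_mem_Icc
  calc bridgeCount n
      = ∑ t ∈ Icc 1 n, ((bridgeFinset n).filter (firstCut · = t)).card := by
        rw [bridgeCount_eq_card hn, card_eq_sum_card_fiberwise hmaps]
    _ = ∑ t ∈ Icc 1 n, irrBridgeCount t * bridgeCount (n - t) := by
        refine sum_congr rfl fun t ht => ?_
        obtain ⟨ht, htn⟩ := mem_Icc.1 ht
        rcases htn.lt_or_eq with htn | rfl
        · rw [card_filter_firstCut_eq ht htn, irrBridgeCount_eq_card (by omega),
            bridgeCount_eq_card (by omega)]
        · rw [filter_firstCut_eq_self, irrBridgeCount_eq_card (by omega), Nat.sub_self,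
            bridgeCount, mul_one]
    _ = ∑ t ∈ range (n + 1), irrBridgeCount t * bridgeCount (n - t) := by
        refine sum_subset (fun t ht => by simp at ht ⊢; omega) fun t ht ht' => ?_
        obtain rfl : t = 0 := by simp at ht ht'; omega
        simp [irrBridgeCount]
    _ = _ := (Nat.sum_antidiagonal_eq_sum_range_succ
          (fun i j => irrBridgeCount i * bridgeCount j) n).symm

/-- As an identity of formal power series, `B(x)·(1 − A(x)) = 1`, where
`B(x) = Σ_{k≥0} b_k x^k` and `A(x) = Σ_{ℓ≥1} a_ℓ x^ℓ` (note `a_0 = 0`); equivalently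
`B(x) = 1/(1 − A(x))`. -/
theorem bridge_generating_function_identity :
    (PowerSeries.mk fun k => (bridgeCount k : ℤ)) *
      (1 - PowerSeries.mk fun k => (irrBridgeCount k : ℤ)) = 1 := by
  set B := PowerSeries.mk fun k => (bridgeCount k : ℤ)
  set A := PowerSeries.mk fun k => (irrBridgeCount k : ℤ)
  have hB : B = 1 + A * B := by
    ext n
    rw [map_add, PowerSeries.coeff_mul, PowerSeries.coeff_one]
    rcases eq_or_ne n 0 with rfl | hn
    · simp [A, B, bridgeCount, irrBridgeCount]
    · simp [A, B, hn, bridgeCount_eq_sum_antidiagonal hn]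
  linear_combination hB
end
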